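/- arXiv:2207.10146 — 2 statements merged into one kernel-verified Lean document; each statement's English description precedes it below -/
import Mathlib

section
/- Let $K$ be a field, $p_1, p_2, q_1, q_2, C_\beta \in K^\times$ with $p_1 \ne p_2$, $q_1 \ne q_2$, and $p_1 q_1 \ne p_2 q_2$. Then \[ -\frac{\det\begin{pmatrix}0&1&0\\1&q_1&p_1^{-1}q_1^{-1}\\1&q_2&p_2^{-1}q_2^{-1}\end{pmatrix}}{\det\begin{pmatrix}0&1&0\\1&q_1&p_1^{-1}\\1&q_2&p_2^{-1}\end{pmatrix}} \cdot \left(-\frac{\det\begin{pmatrix}0&0&1\\1&q_1&q_1^2\\1&q_2&q_2^2\end{pmatrix}}{\det\begin{pmatrix}0&0&C_\beta^{-1}\\1&q_1&p_1^{-1}q_1^{-1}\\1&q_2&p_2^{-1}q_2^{-1}\end{pmatrix}}\right) \cdot \left(-\frac{\det\begin{pmatrix}1&0&0\\1&q_1&p_1^{-1}\\1&q_2&p_2^{-1}\end{pmatrix}}{\det\begin{pmatrix}1&0&0\\1&q_1&q_1^2\\1&q_2&q_2^2\end{pmatrix}}\right) = \frac{C_\beta\,(p_1 q_1 - p_2 q_2)^2}{p_1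 p_2 q_1^2 q_2^2 (p_1 - p_2)(q_1 - q_2)}, \] provided all the determinants in the denominators are nonzero. -/
/-- The explicit rational reconstruction formula for the face weight `X₂` of the hexagonal
dimer model from its spectral data. -/
theorem stmt12 (K : Type*) [Field K] (p₁ p₂ q₁ q₂ Cβ : K)
    (hp₁ : p₁ ≠ 0) (hp₂ : p₂ ≠ 0) (hq₁ : q₁ ≠ 0) (hq₂ : q₂ ≠ 0) (hCβ : Cβ ≠ 0)
    (hp : p₁ ≠ p₂) (hq : q₁ ≠ q₂) (hpq : p₁ * q₁ ≠ p₂ * q₂)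
    (hD₁ : Matrix.det !![(0 : K), 1, 0; 1, q₁, p₁⁻¹; 1, q₂, p₂⁻¹] ≠ 0)
    (hD₂ : Matrix.det !![(0 : K), 0, Cβ⁻¹; 1, q₁, p₁⁻¹ * q₁⁻¹; 1, q₂, p₂⁻¹ * q₂⁻¹] ≠ 0)
    (hD₃ : Matrix.det !![(1 : K), 0, 0; 1, q₁, q₁ ^ 2; 1, q₂, q₂ ^ 2] ≠ 0) :
    (-(Matrix.det !![(0 : K), 1, 0; 1, q₁, p₁⁻¹ * q₁⁻¹; 1, q₂, p₂⁻¹ * q₂⁻¹]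
        / Matrix.det !![(0 : K), 1, 0; 1, q₁, p₁⁻¹; 1, q₂, p₂⁻¹]))
      * (-(Matrix.det !![(0 : K), 0, 1; 1, q₁, q₁ ^ 2; 1, q₂, q₂ ^ 2]
        / Matrix.det !![(0 : K), 0, Cβ⁻¹; 1, q₁, p₁⁻¹ * q₁⁻¹; 1, q₂, p₂⁻¹ * q₂⁻¹]))
      * (-(Matrix.det !![(1 : K), 0, 0; 1, q₁, p₁⁻¹; 1, q₂, p₂⁻¹]
        / Matrix.det !![(1 : K), 0, 0; 1, q₁, q₁ ^ 2; 1, q₂, q₂ ^ 2]))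
      = Cβ * (p₁ * q₁ - p₂ * q₂) ^ 2
        / (p₁ * p₂ * q₁ ^ 2 * q₂ ^ 2 * (p₁ - p₂) * (q₁ - q₂)) := by
  norm_num [Matrix.det_fin_three, Matrix.vecHead, Matrix.vecTail, Matrix.cons_val_zero, Matrix.cons_val_one, Matrix.cons_val_two] at hD₁ hD₂ hD₃ ⊢
  have hsub : p₁ - p₂ ≠ 0 := sub_ne_zero.mpr hp
  have hsubq : q₁ - q₂ ≠ 0 := sub_ne_zero.mpr hq
  have hsubpq : p₁ * q₁ - p₂ * q₂ ≠ 0 := sub_ne_zero.mpr hpq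
  rw [div_mul_div_comm, div_mul_div_comm, ← neg_div, div_eq_div_iff]
  · field_simp
    ring
  · exact mul_ne_zero (mul_ne_zero hD₁ hD₂) hD₃
  · exact mul_ne_zero (mul_ne_zero (mul_ne_zero (mul_ne_zero (mul_ne_zero hp₁ hp₂)
      (pow_ne_zero 2 hq₁)) (pow_ne_zero 2 hq₂)) hsub) hsubq
end

section
/- Let $B : \mathbb{Z}^n \to \mathbb{Z}^m$ be an additive (group) homomorphism, and define $G = \{\lambda : \mathrm{Fin}\ m \to \mathbb{C}^\times \mid \forall v \in \mathbb{Z}^n,\ \prod_{j} \lambda_j^{(B v)_j} = 1\}$. Then for $a \in \mathbb{Z}^m$, the character $\lambda \mapsto \prod_j \lambda_j^{a_j}$ is identically $1$ on $G$ if and only if $a$ lies in the image of $B$. -/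
open AddCircle

noncomputable def ratCastCircle : AddCircle (1:ℚ) →+ AddCircle (1:ℝ) :=
  QuotientAddGroup.map _ _ (Rat.castHom ℝ).toAddMonoidHom (by
    intro x hx
    obtain ⟨n, hn⟩ := AddSubgroup.mem_zmultiples_iff.mp hx
    exact AddSubgroup.mem_comap.mpr (AddSubgroup.mem_zmultiples_iff.mpr
      ⟨n, by push_cast [← hn]; simp⟩))

lemma ratCastCircle_injective : Function.Injective ratCastCircle := by
  rw [injective_iff_map_eq_zero]
  intro x hx
  induction x using QuotientAddGroup.induction_on with
  | H q =>
    have : ((q : ℝ) : AddCircle (1:ℝ)) = 0 := hx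
    rw [AddCircle.coe_eq_zero_iff] at this ⊢
    obtain ⟨k, hk⟩ := this
    refine ⟨k, ?_⟩
    rw [zsmul_eq_mul, mul_one] at hk ⊢
    exact_mod_cast hk

noncomputable def circleChar : AddCircle (1:ℝ) →+ Additive ℂˣ where
  toFun x := Additive.ofMul (Circle.toUnits (AddCircle.toCircle x))
  map_zero' := by simp [AddCircle.toCircle_zero]
  map_add' x y := by simp [AddCircle.toCircle_add]

lemma circleChar_injective : Function.Injective circleChar := by
  intro x y hxy
  apply AddCircle.injective_toCircle (one_ne_zero : (1:ℝ) ≠ 0)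
  have := congrArg (fun z => ((Additive.toMul z : ℂˣ) : ℂ)) hxy
  simpa [circleChar] using Circle.ext this

noncomputable def F : AddCircle (1:ℚ) →+ Additive ℂˣ := circleChar.comp ratCastCircle

lemma F_injective : Function.Injective F :=
  circleChar_injective.comp ratCastCircle_injective

/-- Borisov–Hua: for an additive map `B : ℤⁿ → ℤᵐ` with associated subgroup
`G = {λ : (ℂˣ)ᵐ | ∀ v, ∏ⱼ λⱼ^{(Bv)ⱼ} = 1}`, a character `λ ↦ ∏ⱼ λⱼ^{aⱼ}` is identically `1`
on `G` if and only if `a` lies in the image of `B`. -/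
theorem stmt13 (n m : ℕ) (B : (Fin n → ℤ) →+ (Fin m → ℤ)) (a : Fin m → ℤ) :
    (∀ lam : Fin m → ℂˣ,
        (∀ v : Fin n → ℤ, ∏ j, lam j ^ (B v j) = 1) → ∏ j, lam j ^ (a j) = 1)
      ↔ a ∈ Set.range B := by
  constructor
  · intro h
    set L : AddSubgroup (Fin m → ℤ) := B.range
    suffices ha : a ∈ L by
      obtain ⟨v, hv⟩ := ha
      exact ⟨v, hv⟩
    rw [← QuotientAddGroup.eq_zero_iff]
    apply CharacterModule.eq_zero_of_character_apply
    intro c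
    set χ : (Fin m → ℤ) →+ AddCircle (1:ℚ) := c.comp (QuotientAddGroup.mk' L) with hχ
    set lam : Fin m → ℂˣ := fun j => Additive.toMul (F (χ (Pi.single j 1))) with hlam
    have key : ∀ w : Fin m → ℤ, ∏ j, lam j ^ (w j) = Additive.toMul (F (χ w)) := by
      intro w
      conv_rhs => rw [pi_eq_sum_univ w]
      rw [map_sum, map_sum, toMul_sum]
      refine Finset.prod_congr rfl fun j _ => ?_
      have hsingle : (fun j' => if j = j' then (1:ℤ) else 0) = Pi.single j 1 := by
        funext k; simp [Pi.single_apply, eq_comm]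
      rw [hsingle, map_zsmul, map_zsmul, toMul_zsmul]
    have h1 : ∀ v : Fin n → ℤ, ∏ j, lam j ^ (B v j) = 1 := by
      intro v
      rw [key]
      have : χ (B v) = 0 := by
        have : (QuotientAddGroup.mk' L) (B v) = 0 := by
          rw [QuotientAddGroup.mk'_apply, QuotientAddGroup.eq_zero_iff]
          exact ⟨v, rfl⟩
        show c (QuotientAddGroup.mk' L (B v)) = 0
        rw [this]; exact map_zero c
      rw [this]; simp
    have h2 := h lam h1
    rw [key] at h2
    have hF : F (χ a) = 0 := by
      have := congrArg Additive.ofMul h2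
      simpa using this
    have hχa : χ a = 0 := F_injective (by rw [hF, map_zero])
    exact hχa
  · rintro ⟨v, rfl⟩ lam hlam
    exact hlam v
end
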